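/- arXiv:1506.03270 — 3 statements merged into one kernel-verified Lean document; each statement's English description precedes it below -/
import Mathlib

section
/- Let g(φ) = φ/sin φ and μ(φ) = (φ − sin φ cos φ)/sin²φ. Then for every φ ∈ (0,π), (g″(φ)·μ′(φ) − g′(φ)·μ″(φ))/(μ′(φ))³ = sin³φ cos φ/(4(sin φ − φ cos φ)), where g′, g″, μ′, μ″ denote first and second derivatives. -/
open Real

/-- `g(φ) = φ/sin φ`. -/
noncomputable def gH (φ : ℝ) : ℝ := φ / Real.sin φ

/-- `μ(φ) = (φ − sin φ cos φ)/sin²φ`. -/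
noncomputable def muH (φ : ℝ) : ℝ := (φ - Real.sin φ * Real.cos φ) / (Real.sin φ) ^ 2

/-!
With `A = sin φ − φ cos φ` one has `g′ = A / sin²φ` and `μ′ = 2A / sin³φ`, so `g′ = (sin φ / 2) μ′`.
Whenever `f′ = a h′`, the product rule gives `f″h′ − f′h″ = a′ h′²`; here `a′ = cos φ / 2`, and the
quotient collapses to `cos φ / (2 μ′)`.
-/

open Filter Topology

theorem deriv_deriv_mul_sub_deriv_mul_deriv_deriv {𝕜 : Type*} [NontriviallyNormedField 𝕜]
    {f h a : 𝕜 → 𝕜} {x : 𝕜} (hf : deriv f =ᶠ[𝓝 x] a * deriv h) (ha : DifferentiableAt 𝕜 a x)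
    (hh : DifferentiableAt 𝕜 (deriv h) x) :
    deriv (deriv f) x * deriv h x - deriv f x * deriv (deriv h) x = deriv a x * deriv h x ^ 2 := by
  rw [hf.deriv_eq, hf.eq_of_nhds, deriv_mul ha hh, Pi.mul_apply]
  ring

theorem Real.sin_sub_mul_cos_pos {x : ℝ} (h0 : 0 < x) (hπ : x < π) : 0 < sin x - x * cos x := by
  have hsin : 0 < sin x := sin_pos_of_pos_of_lt_pi h0 hπ
  rcases le_or_gt (π / 2) x with hx | hx
  · nlinarith [cos_nonpos_of_pi_div_two_le_of_le hx (by linarith [pi_pos])]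
  · have hcos : 0 < cos x := cos_pos_of_mem_Ioo ⟨by linarith, hx⟩
    have htan := mul_lt_mul_of_pos_right (lt_tan h0 hx) hcos
    rw [tan_mul_cos hcos.ne'] at htan
    linarith

theorem hasDerivAt_gH {x : ℝ} (hx : sin x ≠ 0) :
    HasDerivAt gH ((sin x - x * cos x) / sin x ^ 2) x :=
  ((hasDerivAt_id' x).fun_div (hasDerivAt_sin x) hx).congr_deriv (by ring)

theorem hasDerivAt_muH {x : ℝ} (hx : sin x ≠ 0) :
    HasDerivAt muH (2 * (sin x - x * cos x) / sin x ^ 3) x := by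
  refine (((hasDerivAt_id' x).fun_sub ((hasDerivAt_sin x).fun_mul (hasDerivAt_cos x))).fun_div
    ((hasDerivAt_sin x).fun_pow 2) (pow_ne_zero 2 hx)).congr_deriv ?_
  field_simp
  linear_combination sin x ^ 2 * sin_sq_add_cos_sq x

theorem isOpen_setOf_sin_ne_zero : IsOpen {x : ℝ | sin x ≠ 0} :=
  isOpen_ne_fun continuous_sin continuous_const

theorem deriv_gH_eventuallyEq {x : ℝ} (hx : sin x ≠ 0) :
    deriv gH =ᶠ[𝓝 x] (fun y => sin y / 2) * deriv muH := by
  filter_upwards [isOpen_setOf_sin_ne_zero.mem_nhds hx] with y hy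
  rw [Pi.mul_apply, (hasDerivAt_gH hy).deriv, (hasDerivAt_muH hy).deriv]
  field_simp

theorem differentiableAt_deriv_muH {x : ℝ} (hx : sin x ≠ 0) :
    DifferentiableAt ℝ (deriv muH) x := by
  have hμ' : deriv muH =ᶠ[𝓝 x] fun y => 2 * (sin y - y * cos y) / sin y ^ 3 := by
    filter_upwards [isOpen_setOf_sin_ne_zero.mem_nhds hx] with y hy
    exact (hasDerivAt_muH hy).deriv
  rw [hμ'.differentiableAt_iff]
  fun_prop (disch := exact pow_ne_zero 3 hx)

/-- For `φ ∈ (0,π)`,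
`(g″μ′ − g′μ″)/(μ′)³ = sin³φ cos φ/(4(sin φ − φ cos φ))`. -/
theorem gH_muH_second_deriv_quotient (φ : ℝ) (hφ : φ ∈ Set.Ioo 0 π) :
    (deriv (deriv gH) φ * deriv muH φ - deriv gH φ * deriv (deriv muH) φ)
        / (deriv muH φ) ^ 3
      = (Real.sin φ) ^ 3 * Real.cos φ / (4 * (Real.sin φ - φ * Real.cos φ)) := by
  have hsin : 0 < sin φ := sin_pos_of_pos_of_lt_pi hφ.1 hφ.2
  have hA : 0 < sin φ - φ * cos φ := sin_sub_mul_cos_pos hφ.1 hφ.2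
  have ha : HasDerivAt (fun y => sin y / 2) (cos φ / 2) φ := (hasDerivAt_sin φ).div_const 2
  rw [deriv_deriv_mul_sub_deriv_mul_deriv_deriv (deriv_gH_eventuallyEq hsin.ne')
      ha.differentiableAt (differentiableAt_deriv_muH hsin.ne'),
    ha.deriv, (hasDerivAt_muH hsin.ne').deriv]
  field_simp
  ring
end

section
/- For every φ ∈ [0, π], one has the inequality φ sin²φ cos φ ≤ 3(sin φ − φ cos φ). -/
open Real

/-!
Let `g φ = 3 (sin φ − φ cos φ) − φ sin²φ cos φ`, so that `g 0 = 0`. Using `sin³ = sin − sin cos²`,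
`g' φ = sin φ · ((φ − sin φ cos φ) + 3 φ sin²φ)`, and `sin φ cos φ = sin (2φ) / 2 ≤ φ` for `φ ≥ 0`.
Hence `g' ≥ 0` on `[0, π]`, so `g` is monotone there and `g φ ≥ g 0 = 0`.
-/

namespace Real

lemma sin_mul_cos_le_self {x : ℝ} (hx : 0 ≤ x) : sin x * cos x ≤ x := by
  have h := sin_le (by positivity : 0 ≤ 2 * x)
  rw [sin_two_mul] at h
  linarith

end Real

noncomputable def heisGap (φ : ℝ) : ℝ :=
  3 * (sin φ - φ * cos φ) - φ * sin φ ^ 2 * cos φ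

lemma hasDerivAt_heisGap (φ : ℝ) :
    HasDerivAt heisGap (sin φ * (φ - sin φ * cos φ + 3 * φ * sin φ ^ 2)) φ := by
  refine ((((hasDerivAt_sin φ).sub ((hasDerivAt_id' φ).mul (hasDerivAt_cos φ))).const_mul 3).sub
    (((hasDerivAt_id' φ).mul ((hasDerivAt_sin φ).pow 2)).mul (hasDerivAt_cos φ))).congr_deriv ?_
  simp only [Pi.pow_apply, Pi.mul_apply]
  linear_combination (-2 * φ * sin φ) * sin_sq_add_cos_sq φ

lemma heisGap_deriv_nonneg {φ : ℝ} (h₀ : 0 ≤ φ) (hπ : φ ≤ π) :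
    0 ≤ sin φ * (φ - sin φ * cos φ + 3 * φ * sin φ ^ 2) := by
  have hsc := sin_mul_cos_le_self h₀
  have hφsin : 0 ≤ 3 * φ * sin φ ^ 2 := by positivity
  exact mul_nonneg (sin_nonneg_of_nonneg_of_le_pi h₀ hπ) (by linarith)

lemma monotoneOn_heisGap : MonotoneOn heisGap (Set.Icc 0 π) :=
  monotoneOn_of_hasDerivWithinAt_nonneg (convex_Icc 0 π)
    (fun x _ => (hasDerivAt_heisGap x).continuousAt.continuousWithinAt)
    (fun x _ => (hasDerivAt_heisGap x).hasDerivWithinAt)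
    (fun x hx => by
      rw [interior_Icc] at hx
      exact heisGap_deriv_nonneg hx.1.le hx.2.le)

/-- For every `φ ∈ [0,π]`, `φ sin²φ cos φ ≤ 3(sin φ − φ cos φ)`. -/
theorem heis_F_le_three (φ : ℝ) (hφ : φ ∈ Set.Icc 0 π) :
    φ * (Real.sin φ) ^ 2 * Real.cos φ ≤ 3 * (Real.sin φ - φ * Real.cos φ) := by
  have h := monotoneOn_heisGap (Set.left_mem_Icc.mpr pi_pos.le) hφ hφ.1
  simp only [heisGap, sin_zero, cos_zero] at h
  linarith
end

section
/- (CR sub-Laplacian comparison on H¹.) Let Ω = {(x₁,x₂,t) ∈ ℝ³ : (x₁,x₂) ≠ (0,0), t > 0} and define r : Ω → ℝ by r(x₁,x₂,t) = (φ/sin φ)·√(x₁²+x₂²), where φ ∈ (0,π) is the unique solution of (φ − sin φ cos φ)/sin²φ = t/(x₁²+x₂²). Let X₁ = ∂/∂x₁ + 2x₂ ∂/∂t and X₂ = ∂/∂x₂ − 2x₁ ∂/∂t. Then at every point of Ω, ½(X₁(X₁ r) + X₂(X₂ r)) ≤ 3/r. -/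
open Real

/-- The derivative along `X₁ = ∂/∂x₁ + 2x₂ ∂/∂t` on ℝ³. -/
noncomputable def heisXd1 (f : ℝ × ℝ × ℝ → ℝ) (p : ℝ × ℝ × ℝ) : ℝ :=
  fderiv ℝ f p (1, 0, 2 * p.2.1)

/-- The derivative along `X₂ = ∂/∂x₂ − 2x₁ ∂/∂t` on ℝ³. -/
noncomputable def heisXd2 (f : ℝ × ℝ × ℝ → ℝ) (p : ℝ × ℝ × ℝ) : ℝ :=
  fderiv ℝ f p (0, 1, -2 * p.1)

/-- The region `Ω = {(x₁,x₂,t) : (x₁,x₂) ≠ (0,0), t > 0}`. -/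
def heisOmega : Set (ℝ × ℝ × ℝ) := {p | (p.1, p.2.1) ≠ (0, 0) ∧ 0 < p.2.2}

/-!
Write `ψ ∈ (0, π)` for the angle and `ρ = ‖x‖`, so that `r = ψρ / sin ψ`. Differentiating
`μ(ψ) = t/ρ²` implicitly gives `dr = (cos ψ / ρ)(x₁ dx₁ + x₂ dx₂) + (sin ψ / 2ρ) dt`, hence
`X₁r = (x₁ cos ψ + x₂ sin ψ)/ρ` and `X₂r = (x₂ cos ψ − x₁ sin ψ)/ρ`. Differentiating once more,
`X₁X₁r + X₂X₂r = (sin ψ cos ψ + ψ (sin²ψ − cos²ψ)) / (ρ (sin ψ − ψ cos ψ))`, and comparing this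
with `6/r` reduces the theorem to the one-variable inequality
`(12 − θ²) cos θ + 7θ sin θ ≤ 12` for `θ = 2ψ ∈ (0, 2π)`.
-/

open Set Filter Topology

theorem HasStrictDerivAt.hasFDerivAt_of_eventually_comp_eq {E : Type*} [NormedAddCommGroup E]
    [NormedSpace ℝ E] {f : ℝ → ℝ} {f' : ℝ} {s : Set ℝ} {g u : E → ℝ} {u' : E →L[ℝ] ℝ} {x : E}
    (hf : HasStrictDerivAt f f' (g x)) (hf' : f' ≠ 0) (hs : IsOpen s) (hinj : InjOn f s)
    (hgu : ∀ᶠ y in 𝓝 x, g y ∈ s ∧ f (g y) = u y) (hu : HasFDerivAt u u' x) :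
    HasFDerivAt g (f'⁻¹ • u') x := by
  set L := hf.localInverse f f' (g x) hf'
  have hux : u x = f (g x) := hgu.self_of_nhds.2.symm
  have hL : HasStrictDerivAt L f'⁻¹ (u x) := hux ▸ hf.to_localInverse hf'
  have hLgx : L (u x) = g x := hux ▸ (hf.eventually_left_inverse hf').self_of_nhds
  have hLs : ∀ᶠ v in 𝓝 (u x), L v ∈ s :=
    hL.hasDerivAt.continuousAt.preimage_mem_nhds (hs.mem_nhds (hLgx ▸ hgu.self_of_nhds.1))
  have hright : ∀ᶠ v in 𝓝 (u x), f (L v) = v := hux ▸ hf.eventually_right_inverse hf'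
  refine (hL.hasDerivAt.comp_hasFDerivAt x hu).congr_of_eventuallyEq ?_
  filter_upwards [hgu, hu.continuousAt.eventually (hLs.and hright)] with y ⟨hgy, hfgy⟩ ⟨hLy, hfLy⟩
  exact hinj hgy hLy (hfgy.trans hfLy.symm)

namespace Heisenberg

lemma sin_sub_mul_cos_pos {x : ℝ} (hx : x ∈ Ioo 0 π) : 0 < sin x - x * cos x := by
  have hsin : 0 < sin x := sin_pos_of_pos_of_lt_pi hx.1 hx.2
  rcases lt_or_ge x (π / 2) with hx2 | hx2
  · have hcos : 0 < cos x := cos_pos_of_mem_Ioo ⟨by linarith [hx.1], hx2⟩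
    have htan := lt_tan hx.1 hx2
    rw [tan_eq_sin_div_cos, lt_div_iff₀ hcos] at htan
    linarith
  · nlinarith [cos_nonpos_of_pi_div_two_le_of_le hx2 (by linarith [hx.2]), hx.1]

/-- The left-hand side `g` satisfies `g 0 = 12`, `g' 0 = 0` and, on `[0, π]`,
`g'' θ = θ (θ cos θ − 3 sin θ) ≤ 0`; so `g'` and then `g` decrease there. -/
lemma twelve_sub_sq_mul_cos_add_le_of_le_pi {θ : ℝ} (hθ : θ ∈ Icc 0 π) :
    (12 - θ ^ 2) * cos θ + 7 * θ * sin θ ≤ 12 := by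
  have hg' : ∀ x, HasDerivAt (fun x => 5 * x * cos x + (x ^ 2 - 5) * sin x)
      (x * (x * cos x - 3 * sin x)) x := fun x => by
    refine ((((hasDerivAt_id x).const_mul 5).mul (hasDerivAt_cos x)).add
      (((hasDerivAt_pow 2 x).sub_const 5).mul (hasDerivAt_sin x))).congr_deriv ?_
    simp only [id]; push_cast; ring
  have hg : ∀ x, HasDerivAt (fun x => (12 - x ^ 2) * cos x + 7 * x * sin x)
      (5 * x * cos x + (x ^ 2 - 5) * sin x) x := fun x => by
    refine ((((hasDerivAt_pow 2 x).const_sub 12).mul (hasDerivAt_cos x)).add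
      (((hasDerivAt_id x).const_mul 7).mul (hasDerivAt_sin x))).congr_deriv ?_
    simp only [id]; push_cast; ring
  have hzero : (0 : ℝ) ∈ Icc 0 π := left_mem_Icc.2 pi_pos.le
  have hanti' := antitoneOn_of_hasDerivWithinAt_nonpos (convex_Icc 0 π) (by fun_prop)
    (fun x _ => (hg' x).hasDerivWithinAt) fun x hx => by
      rw [interior_Icc] at hx
      have := sin_sub_mul_cos_pos hx
      have := sin_pos_of_pos_of_lt_pi hx.1 hx.2
      nlinarith [hx.1]
  have hanti := antitoneOn_of_hasDerivWithinAt_nonpos (convex_Icc 0 π) (by fun_prop)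
    (fun x _ => (hg x).hasDerivWithinAt) fun x hx => by
      simpa using hanti' hzero (interior_subset hx) (interior_subset hx).1
  simpa using hanti hzero hθ hθ.1

lemma twelve_sub_sq_mul_cos_add_le_of_pi_le {θ : ℝ} (hθ : θ ∈ Icc π (2 * π)) :
    (12 - θ ^ 2) * cos θ + 7 * θ * sin θ ≤ 12 := by
  have hπ : 0 < π := pi_pos
  have hsin : sin θ ≤ 0 := by
    rw [← sin_sub_two_pi]
    exact sin_nonpos_of_nonpos_of_neg_pi_le (by linarith [hθ.2]) (by linarith [hθ.1])
  have hsin_term : 7 * θ * sin θ ≤ 0 := mul_nonpos_of_nonneg_of_nonpos (by linarith [hθ.1]) hsin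
  rcases le_or_gt (θ ^ 2) 24 with hsq | hsq
  · nlinarith [neg_one_le_cos θ, cos_le_one θ]
  · have h3π2 : 3 * π / 2 ≤ θ := by
      by_contra! h
      nlinarith [pi_lt_d2, hθ.1]
    have hcos : 0 ≤ cos θ := by
      rw [← cos_sub_two_pi]
      exact cos_nonneg_of_neg_pi_div_two_le_of_le (by linarith) (by linarith [hθ.2])
    nlinarith

lemma twelve_sub_sq_mul_cos_add_le {θ : ℝ} (hθ : θ ∈ Icc 0 (2 * π)) :
    (12 - θ ^ 2) * cos θ + 7 * θ * sin θ ≤ 12 := by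
  rcases le_total θ π with h | h
  · exact twelve_sub_sq_mul_cos_add_le_of_le_pi ⟨hθ.1, h⟩
  · exact twelve_sub_sq_mul_cos_add_le_of_pi_le ⟨h, hθ.2⟩

noncomputable def heisMu (φ : ℝ) : ℝ := (φ - sin φ * cos φ) / sin φ ^ 2

lemma hasStrictDerivAt_heisMu {φ : ℝ} (h : sin φ ≠ 0) :
    HasStrictDerivAt heisMu (2 * (sin φ - φ * cos φ) / sin φ ^ 3) φ := by
  refine (((hasStrictDerivAt_id φ).sub
    ((hasStrictDerivAt_sin φ).mul (hasStrictDerivAt_cos φ))).div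
    ((hasStrictDerivAt_sin φ).pow 2) (pow_ne_zero 2 h)).congr_deriv ?_
  simp only [Pi.pow_apply, Pi.mul_apply, Pi.sub_apply, id]
  field_simp
  linear_combination sin φ ^ 2 * sin_sq_add_cos_sq φ

lemma heisMu_deriv_pos {φ : ℝ} (h : φ ∈ Ioo 0 π) : 0 < 2 * (sin φ - φ * cos φ) / sin φ ^ 3 := by
  have hsin := sin_pos_of_pos_of_lt_pi h.1 h.2
  have hE := sin_sub_mul_cos_pos h
  positivity

lemma strictMonoOn_heisMu : StrictMonoOn heisMu (Ioo 0 π) := by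
  have hderiv (φ : ℝ) (hφ : φ ∈ Ioo 0 π) :=
    (hasStrictDerivAt_heisMu (sin_pos_of_pos_of_lt_pi hφ.1 hφ.2).ne').hasDerivAt
  exact strictMonoOn_of_hasDerivWithinAt_pos (convex_Ioo 0 π)
    (fun φ hφ => (hderiv φ hφ).continuousAt.continuousWithinAt)
    (fun φ hφ => (hderiv φ (interior_subset hφ)).hasDerivWithinAt)
    (fun φ hφ => heisMu_deriv_pos (interior_subset hφ))

noncomputable def covec (a b c : ℝ) : ℝ × ℝ × ℝ →L[ℝ] ℝ :=
  a • ContinuousLinearMap.fst ℝ ℝ (ℝ × ℝ)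
    + b • (ContinuousLinearMap.fst ℝ ℝ ℝ).comp (ContinuousLinearMap.snd ℝ ℝ (ℝ × ℝ))
    + c • (ContinuousLinearMap.snd ℝ ℝ ℝ).comp (ContinuousLinearMap.snd ℝ ℝ (ℝ × ℝ))

@[simp]
lemma covec_apply (a b c : ℝ) (v : ℝ × ℝ × ℝ) :
    covec a b c v = a * v.1 + b * v.2.1 + c * v.2.2 := by
  simp [covec]

def horizSq (q : ℝ × ℝ × ℝ) : ℝ := q.1 ^ 2 + q.2.1 ^ 2

lemma isOpen_heisOmega : IsOpen heisOmega :=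
  (isOpen_compl_singleton.preimage (continuous_fst.prodMk continuous_snd.fst)).inter
    (isOpen_Ioi.preimage continuous_snd.snd)

lemma horizSq_pos {q : ℝ × ℝ × ℝ} (hq : q ∈ heisOmega) : 0 < horizSq q := by
  have : q.1 ≠ 0 ∨ q.2.1 ≠ 0 := by
    by_contra! h
    exact hq.1 (Prod.ext h.1 h.2)
  unfold horizSq
  rcases this with h | h <;> positivity

lemma hasFDerivAt_horizSq (q : ℝ × ℝ × ℝ) :
    HasFDerivAt horizSq (covec (2 * q.1) (2 * q.2.1) 0) q := by
  refine ((hasFDerivAt_fst.pow 2).add (hasFDerivAt_snd.fst.pow 2)).congr_fderiv ?_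
  ext <;> simp

lemma hasFDerivAt_div_horizSq {q : ℝ × ℝ × ℝ} (hq : q ∈ heisOmega) :
    HasFDerivAt (fun p => p.2.2 / horizSq p)
      (covec (-(2 * q.1 * q.2.2) / horizSq q ^ 2) (-(2 * q.2.1 * q.2.2) / horizSq q ^ 2)
        (1 / horizSq q)) q := by
  have hS := (horizSq_pos hq).ne'
  simp only [div_eq_mul_inv]
  refine (hasFDerivAt_snd.snd.mul ((hasDerivAt_inv hS).comp_hasFDerivAt q
    (hasFDerivAt_horizSq q))).congr_fderiv ?_
  refine ContinuousLinearMap.ext fun v => ?_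
  simp only [Function.comp_apply, add_apply, smul_apply, smul_eq_mul, covec_apply,
    ContinuousLinearMap.comp_apply, ContinuousLinearMap.coe_snd']
  field_simp
  ring

def IsHeisAngle (φf : ℝ × ℝ × ℝ → ℝ) : Prop :=
  ∀ p ∈ heisOmega, φf p ∈ Ioo 0 π ∧ heisMu (φf p) = p.2.2 / horizSq p

lemma IsHeisAngle.hasFDerivAt {φf : ℝ × ℝ × ℝ → ℝ} (hφ : IsHeisAngle φf) {q : ℝ × ℝ × ℝ}
    (hq : q ∈ heisOmega) :
    HasFDerivAt φf
      (covec (-(q.1 * sin (φf q) * (φf q - sin (φf q) * cos (φf q)))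
          / (horizSq q * (sin (φf q) - φf q * cos (φf q))))
        (-(q.2.1 * sin (φf q) * (φf q - sin (φf q) * cos (φf q)))
          / (horizSq q * (sin (φf q) - φf q * cos (φf q))))
        (sin (φf q) ^ 3 / (2 * horizSq q * (sin (φf q) - φf q * cos (φf q))))) q := by
  obtain ⟨hmem, hmu⟩ := hφ q hq
  have hsin := sin_pos_of_pos_of_lt_pi hmem.1 hmem.2
  have hE := sin_sub_mul_cos_pos hmem
  have hS := horizSq_pos hq
  have ht : q.2.2 = horizSq q * (φf q - sin (φf q) * cos (φf q)) / sin (φf q) ^ 2 := by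
    rw [heisMu, eq_div_iff hS.ne'] at hmu
    rw [← hmu]; field_simp
  have hev : ∀ᶠ p in 𝓝 q, φf p ∈ Ioo 0 π ∧ heisMu (φf p) = p.2.2 / horizSq p :=
    Filter.eventually_of_mem (isOpen_heisOmega.mem_nhds hq) hφ
  refine ((hasStrictDerivAt_heisMu hsin.ne').hasFDerivAt_of_eventually_comp_eq
    (heisMu_deriv_pos hmem).ne' isOpen_Ioo strictMonoOn_heisMu.injOn hev
    (hasFDerivAt_div_horizSq hq)).congr_fderiv ?_
  refine ContinuousLinearMap.ext fun v => ?_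
  simp only [smul_apply, smul_eq_mul, covec_apply]
  rw [ht]
  field_simp

lemma hasFDerivAt_sqrt_horizSq {q : ℝ × ℝ × ℝ} (hq : q ∈ heisOmega) :
    HasFDerivAt (fun p => √(horizSq p))
      (covec (q.1 / √(horizSq q)) (q.2.1 / √(horizSq q)) 0) q := by
  have hS := horizSq_pos hq
  refine ((hasDerivAt_sqrt hS.ne').comp_hasFDerivAt q (hasFDerivAt_horizSq q)).congr_fderiv ?_
  refine ContinuousLinearMap.ext fun v => ?_
  simp only [smul_apply, smul_eq_mul, covec_apply]
  field_simp
  ring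

lemma hasFDerivAt_heisDist {φf r : ℝ × ℝ × ℝ → ℝ} (hφ : IsHeisAngle φf)
    (hr : ∀ p ∈ heisOmega, r p = φf p / sin (φf p) * √(horizSq p))
    {q : ℝ × ℝ × ℝ} (hq : q ∈ heisOmega) :
    HasFDerivAt r (covec (q.1 * cos (φf q) / √(horizSq q)) (q.2.1 * cos (φf q) / √(horizSq q))
      (sin (φf q) / (2 * √(horizSq q)))) q := by
  have hmem := (hφ q hq).1
  have hsin := sin_pos_of_pos_of_lt_pi hmem.1 hmem.2
  have hE := sin_sub_mul_cos_pos hmem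
  have hρ : 0 < √(horizSq q) := sqrt_pos.2 (horizSq_pos hq)
  have hS : horizSq q ≠ 0 := (horizSq_pos hq).ne'
  have hρsq : √(horizSq q) ^ 2 = horizSq q := sq_sqrt (horizSq_pos hq).le
  have hdiv : HasDerivAt (fun y => y / sin y) ((sin (φf q) - φf q * cos (φf q)) / sin (φf q) ^ 2)
      (φf q) :=
    ((hasDerivAt_id _).div (hasDerivAt_sin _) hsin.ne').congr_deriv (by simp)
  have hev : r =ᶠ[𝓝 q] fun p => φf p / sin (φf p) * √(horizSq p) :=
    Filter.eventually_of_mem (isOpen_heisOmega.mem_nhds hq) hr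
  refine (((hdiv.comp_hasFDerivAt q (hφ.hasFDerivAt hq)).mul
    (hasFDerivAt_sqrt_horizSq hq)).congr_of_eventuallyEq hev).congr_fderiv ?_
  refine ContinuousLinearMap.ext fun v => ?_
  simp only [Function.comp_apply, add_apply, smul_apply, smul_eq_mul, covec_apply]
  field_simp
  rw [hρsq]
  field_simp
  ring

lemma heisXd1_congr {f g : ℝ × ℝ × ℝ → ℝ} {p : ℝ × ℝ × ℝ} (h : f =ᶠ[𝓝 p] g) :
    heisXd1 f p = heisXd1 g p := by
  rw [heisXd1, heisXd1, h.fderiv_eq]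

lemma heisXd2_congr {f g : ℝ × ℝ × ℝ → ℝ} {p : ℝ × ℝ × ℝ} (h : f =ᶠ[𝓝 p] g) :
    heisXd2 f p = heisXd2 g p := by
  rw [heisXd2, heisXd2, h.fderiv_eq]

lemma heisXd1_heisDist {φf r : ℝ × ℝ × ℝ → ℝ} (hφ : IsHeisAngle φf)
    (hr : ∀ p ∈ heisOmega, r p = φf p / sin (φf p) * √(horizSq p))
    {q : ℝ × ℝ × ℝ} (hq : q ∈ heisOmega) :
    heisXd1 r q = (q.1 * cos (φf q) + q.2.1 * sin (φf q)) / √(horizSq q) := by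
  rw [heisXd1, (hasFDerivAt_heisDist hφ hr hq).fderiv, covec_apply]
  field_simp
  ring

lemma heisXd2_heisDist {φf r : ℝ × ℝ × ℝ → ℝ} (hφ : IsHeisAngle φf)
    (hr : ∀ p ∈ heisOmega, r p = φf p / sin (φf p) * √(horizSq p))
    {q : ℝ × ℝ × ℝ} (hq : q ∈ heisOmega) :
    heisXd2 r q = (q.2.1 * cos (φf q) - q.1 * sin (φf q)) / √(horizSq q) := by
  rw [heisXd2, (hasFDerivAt_heisDist hφ hr hq).fderiv, covec_apply]
  field_simp
  ring

lemma heisXd1_add_heisXd2 {φf : ℝ × ℝ × ℝ → ℝ} (hφ : IsHeisAngle φf)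
    {p : ℝ × ℝ × ℝ} (hp : p ∈ heisOmega) :
    heisXd1 (fun q => (q.1 * cos (φf q) + q.2.1 * sin (φf q)) / √(horizSq q)) p
      + heisXd2 (fun q => (q.2.1 * cos (φf q) - q.1 * sin (φf q)) / √(horizSq q)) p
      = (cos (φf p) * sin (φf p) + φf p * (sin (φf p) ^ 2 - cos (φf p) ^ 2))
        / (√(horizSq p) * (sin (φf p) - φf p * cos (φf p))) := by
  have hmem := (hφ p hp).1
  have hE : sin (φf p) - cos (φf p) * φf p ≠ 0 := by
    rw [mul_comm]; exact (sin_sub_mul_cos_pos hmem).ne'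
  have hS : horizSq p ≠ 0 := (horizSq_pos hp).ne'
  have hρ : 0 < √(horizSq p) := sqrt_pos.2 (horizSq_pos hp)
  have hρsq : √(horizSq p) ^ 2 = horizSq p := sq_sqrt (horizSq_pos hp).le
  have hdcos := (hasDerivAt_cos _).comp_hasFDerivAt p (hφ.hasFDerivAt hp)
  have hdsin := (hasDerivAt_sin _).comp_hasFDerivAt p (hφ.hasFDerivAt hp)
  have hdinv := (hasDerivAt_inv hρ.ne').comp_hasFDerivAt p (hasFDerivAt_sqrt_horizSq hp)
  have h1 := ((hasFDerivAt_fst.mul hdcos).add (hasFDerivAt_snd.fst.mul hdsin)).mul hdinv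
  have h2 := ((hasFDerivAt_snd.fst.mul hdcos).sub (hasFDerivAt_fst.mul hdsin)).mul hdinv
  simp only [div_eq_mul_inv]
  rw [heisXd1, heisXd2, HasFDerivAt.fderiv (f := fun q =>
    (q.1 * cos (φf q) + q.2.1 * sin (φf q)) * (√(horizSq q))⁻¹) h1,
    HasFDerivAt.fderiv (f := fun q =>
    (q.2.1 * cos (φf q) - q.1 * sin (φf q)) * (√(horizSq q))⁻¹) h2]
  simp only [Pi.add_apply, Pi.mul_apply, Pi.sub_apply, Function.comp_apply, neg_smul, smul_neg,
    smul_add, add_apply, sub_apply, neg_apply, smul_apply, smul_eq_mul, covec_apply,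
    ContinuousLinearMap.coe_fst', ContinuousLinearMap.comp_apply, ContinuousLinearMap.coe_snd']
  field_simp
  rw [hρsq]
  unfold horizSq
  ring

lemma subLaplacian_formula_le {ψ ρ : ℝ} (hψ : ψ ∈ Ioo 0 π) (hρ : 0 < ρ) :
    (cos ψ * sin ψ + ψ * (sin ψ ^ 2 - cos ψ ^ 2)) / (ρ * (sin ψ - ψ * cos ψ)) / 2
      ≤ 3 / (ψ / sin ψ * ρ) := by
  have hsin := sin_pos_of_pos_of_lt_pi hψ.1 hψ.2
  have hE := sin_sub_mul_cos_pos hψ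
  have htrig : ψ ^ 2 * (sin ψ ^ 2 - cos ψ ^ 2) + 7 * ψ * sin ψ * cos ψ - 6 * sin ψ ^ 2 ≤ 0 := by
    have := twelve_sub_sq_mul_cos_add_le (θ := 2 * ψ) ⟨by linarith [hψ.1], by linarith [hψ.2]⟩
    rw [cos_two_mul, sin_two_mul] at this
    nlinarith [sin_sq_add_cos_sq ψ]
  rw [show 3 / (ψ / sin ψ * ρ) = 3 * sin ψ / (ψ * ρ) by field_simp, div_div,
    div_le_div_iff₀ (by positivity) (mul_pos hψ.1 hρ)]
  nlinarith [mul_le_mul_of_nonneg_left htrig hρ.le]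

end Heisenberg

open Heisenberg

/-- CR sub-Laplacian comparison on `H¹`: on `Ω`, the Carnot–Carathéodory
distance `r = (φ/sin φ)‖x‖`, where `φ ∈ (0,π)` solves
`(φ − sin φ cos φ)/sin²φ = t/‖x‖²`, satisfies `½(X₁(X₁r) + X₂(X₂r)) ≤ 3/r`. -/
theorem heis_subLap_comparison (φf r : ℝ × ℝ × ℝ → ℝ)
    (hφ : ∀ p ∈ heisOmega, φf p ∈ Set.Ioo 0 π ∧
      (φf p - Real.sin (φf p) * Real.cos (φf p)) / (Real.sin (φf p)) ^ 2
        = p.2.2 / (p.1 ^ 2 + p.2.1 ^ 2))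
    (hr : ∀ p ∈ heisOmega,
      r p = (φf p / Real.sin (φf p)) * Real.sqrt (p.1 ^ 2 + p.2.1 ^ 2)) :
    ∀ p ∈ heisOmega,
      (heisXd1 (heisXd1 r) p + heisXd2 (heisXd2 r) p) / 2 ≤ 3 / r p := by
  intro p hp
  have hangle : IsHeisAngle φf := hφ
  have hΩ : ∀ᶠ q in 𝓝 p, q ∈ heisOmega := isOpen_heisOmega.mem_nhds hp
  rw [heisXd1_congr (hΩ.mono fun q hq => heisXd1_heisDist hangle hr hq),
    heisXd2_congr (hΩ.mono fun q hq => heisXd2_heisDist hangle hr hq),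
    heisXd1_add_heisXd2 hangle hp, hr p hp]
  exact subLaplacian_formula_le (hφ p hp).1 (sqrt_pos.2 (horizSq_pos hp))
end
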